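/- The function f(t) = tan(t)/(2·ln(cos t))² is convex on (0, π/2). -/

import Mathlib

/-!
With `T = tan` and `L = log ∘ cos` one has `T' = 1 + T² = exp (-2L)` and `L' = -T`, so the second
derivative of `T / (2L)²` is `T · ((1 + T²)(L² + 3L + 3) - 3) / (2L⁴)`. On `(0, π/2)` we have
`T > 0` and `L < 0`, and with `u = -L` the bracket is nonnegative because
`exp (2u) (u² - 3u + 3) ≥ 3` for `u ≥ 0`, which follows from the Taylor lower bound of degree four
for `exp (2u)`.
-/

open Real

lemma three_le_exp_two_mul_mul (u : ℝ) (hu : 0 ≤ u) : 3 ≤ exp (2 * u) * (u ^ 2 - 3 * u + 3) := by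
  have htaylor := sum_le_exp_of_nonneg (by linarith : (0 : ℝ) ≤ 2 * u) 5
  simp only [Finset.sum_range_succ, Finset.sum_range_zero, Nat.factorial] at htaylor
  norm_num at htaylor
  have hq : 0 < u ^ 2 - 3 * u + 3 := by nlinarith [sq_nonneg (u - 3 / 2)]
  nlinarith [mul_le_mul_of_nonneg_right htaylor hq.le,
    mul_nonneg (mul_nonneg hu hu) (sq_nonneg (u - 1)),
    mul_nonneg (pow_nonneg hu 4) (sq_nonneg (u - 1)), pow_nonneg hu 4, sq_nonneg u]

lemma one_add_tan_sq_eq_exp {x : ℝ} (hx : cos x ≠ 0) : 1 + tan x ^ 2 = exp (-2 * log (cos x)) := by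
  have hlog : 2 * log (cos x) = log (cos x ^ 2) := by rw [log_pow, Nat.cast_ofNat]
  rw [neg_mul, exp_neg, hlog, exp_log (by positivity), ← inv_one_add_tan_sq hx, inv_inv]

lemma hasDerivAt_tan_one_add_sq {x : ℝ} (hx : cos x ≠ 0) : HasDerivAt tan (1 + tan x ^ 2) x := by
  convert hasDerivAt_tan hx using 1
  rw [one_div, ← inv_one_add_tan_sq hx, inv_inv]

lemma hasDerivAt_log_cos {x : ℝ} (hx : cos x ≠ 0) :
    HasDerivAt (fun t => log (cos t)) (-tan x) x := by
  refine ((hasDerivAt_log hx).comp x (hasDerivAt_cos x)).congr_deriv ?_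
  rw [tan_eq_sin_div_cos]
  field_simp

/- `f'` and `f''` for `f = T / (2L)²` under `T' = 1 + T²` and `L' = -T`, as expressions in
`t = T x` and `l = L x`. -/
noncomputable def quotDeriv (t l : ℝ) : ℝ := (1 + t ^ 2) / (4 * l ^ 2) + t ^ 2 / (2 * l ^ 3)

noncomputable def quotDeriv2 (t l : ℝ) : ℝ :=
  t * (1 + t ^ 2) / (2 * l ^ 2) + 3 * t * (1 + t ^ 2) / (2 * l ^ 3) + 3 * t ^ 3 / (2 * l ^ 4)

section Derivatives

variable {T L : ℝ → ℝ} {x : ℝ}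

lemma hasDerivAt_div_two_mul_sq (hT : HasDerivAt T (1 + T x ^ 2) x) (hL : HasDerivAt L (-T x) x)
    (hLx : L x ≠ 0) :
    HasDerivAt (fun t => T t / (2 * L t) ^ 2) (quotDeriv (T x) (L x)) x := by
  refine (hT.fun_div ((hL.const_mul 2).fun_pow 2) (by simp [hLx])).congr_deriv ?_
  simp only [quotDeriv]
  field_simp
  ring

lemma hasDerivAt_quotDeriv (hT : HasDerivAt T (1 + T x ^ 2) x) (hL : HasDerivAt L (-T x) x)
    (hLx : L x ≠ 0) :
    HasDerivAt (fun t => quotDeriv (T t) (L t)) (quotDeriv2 (T x) (L x)) x := by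
  have hsq := hT.fun_pow 2
  refine (((hsq.const_add 1).fun_div ((hL.fun_pow 2).const_mul 4) (by simp [hLx])).fun_add
    (hsq.fun_div ((hL.fun_pow 3).const_mul 2) (by simp [hLx]))).congr_deriv ?_
  simp only [quotDeriv2]
  field_simp
  ring

end Derivatives

lemma quotDeriv2_eq {t l : ℝ} (hl : l ≠ 0) :
    quotDeriv2 t l = t * ((1 + t ^ 2) * (l ^ 2 + 3 * l + 3) - 3) / (2 * l ^ 4) := by
  simp only [quotDeriv2]
  field_simp
  ring

lemma quotDeriv2_nonneg {t l : ℝ} (ht : 0 ≤ t) (hl : l < 0) (hexp : 1 + t ^ 2 = exp (-2 * l)) :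
    0 ≤ quotDeriv2 t l := by
  rw [quotDeriv2_eq hl.ne]
  have hbound := three_le_exp_two_mul_mul (-l) (by linarith)
  rw [mul_neg, ← neg_mul, ← hexp] at hbound
  refine div_nonneg (mul_nonneg ht ?_) (by positivity)
  nlinarith

lemma log_cos_neg {x : ℝ} (hx : x ∈ Set.Ioo 0 (π / 2)) : log (cos x) < 0 := by
  have hcos_lt : cos x < 1 := by
    simpa using cos_lt_cos_of_nonneg_of_le_pi le_rfl (by linarith [hx.2, pi_pos]) hx.1
  exact log_neg (cos_pos_of_mem_Ioo ⟨by linarith [hx.1, pi_pos], hx.2⟩) hcos_lt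

theorem stmt_12 :
    ConvexOn ℝ (Set.Ioo 0 (π/2))
      (fun t : ℝ => Real.tan t / (2 * Real.log (Real.cos t))^2) := by
  have hcos : ∀ x ∈ Set.Ioo 0 (π / 2), cos x ≠ 0 := fun x hx =>
    (cos_pos_of_mem_Ioo ⟨by linarith [hx.1, pi_pos], hx.2⟩).ne'
  have hf' : ∀ x ∈ Set.Ioo 0 (π / 2), HasDerivAt (fun t => tan t / (2 * log (cos t)) ^ 2)
      (quotDeriv (tan x) (log (cos x))) x := fun x hx =>
    hasDerivAt_div_two_mul_sq (hasDerivAt_tan_one_add_sq (hcos x hx))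
      (hasDerivAt_log_cos (hcos x hx)) (log_cos_neg hx).ne
  have hf'' : ∀ x ∈ Set.Ioo 0 (π / 2), HasDerivAt (fun t => quotDeriv (tan t) (log (cos t)))
      (quotDeriv2 (tan x) (log (cos x))) x := fun x hx =>
    hasDerivAt_quotDeriv (hasDerivAt_tan_one_add_sq (hcos x hx))
      (hasDerivAt_log_cos (hcos x hx)) (log_cos_neg hx).ne
  refine convexOn_of_hasDerivWithinAt2_nonneg (f' := fun x => quotDeriv (tan x) (log (cos x)))
    (f'' := fun x => quotDeriv2 (tan x) (log (cos x))) (convex_Ioo _ _)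
    (fun x hx => (hf' x hx).continuousAt.continuousWithinAt) ?_ ?_ ?_ <;> rw [interior_Ioo]
  · exact fun x hx => (hf' x hx).hasDerivWithinAt
  · exact fun x hx => (hf'' x hx).hasDerivWithinAt
  · exact fun x hx => quotDeriv2_nonneg (tan_pos_of_pos_of_lt_pi_div_two hx.1 hx.2).le
      (log_cos_neg hx) (one_add_tan_sq_eq_exp (hcos x hx))
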